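/- For any integer n ≥ 1 and any prime p, Σ_{k=1}^{p-1} B_{n+k} − Σ_{k=1}^{n-1} B_k ≡ D_{p-1} (mod p). -/

import Mathlib

/-!
Let `T_n = ∑_j S(n, j) X^j` be the Bell polynomials, so that `B_n = T_n(1)` and
`T_{n+1} = θ T_n` with `θ = X (1 + d/dX)`. In characteristic `p` the operator `θ` commutes with
multiplication by `X^p`, and `T_p ≡ X^p + T_1`; hence `T_{n+p} ≡ X^p T_n + T_{n+1}`, which at
`X = 1` is Touchard's congruence `B_{n+p} ≡ B_n + B_{n+1}`. By Touchard, the left-hand side does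
not depend on `n`, so it equals `∑_{k<p} B_k`.

Both `T_p ≡ X^p + T_1` and the value of `∑_{k<p} B_k` come from `j! S(k, j) = Δ^j x^k |_{x=0}`.
Over `ZMod p` we have `x^p = x`, so `S(p, j) ≡ S(1, j)` for `j < p`; and `∑_{k<p} x^k` is the
indicator of `x ≠ 1`, so `∑_{k<p} S(k, t+1) ≡ -(-1)^t / t!` for `t + 1 < p`. Summing over `j`,
`∑_{k<p} B_k ≡ 1 - ∑_{t<p-1} (-1)^t / t!`, which is `D_{p-1} = (p-1)! ∑_{t<p} (-1)^t / t!` by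
Wilson's theorem.
-/

open Polynomial Finset

/-- Stirling numbers of the second kind. -/
def stirling2 : ℕ → ℕ → ℕ
  | 0, 0 => 1
  | 0, _ + 1 => 0
  | _ + 1, 0 => 0
  | n + 1, k + 1 => (k + 1) * stirling2 n (k + 1) + stirling2 n k

/-- Signed Stirling numbers of the first kind. -/
def stirling1 : ℕ → ℕ → ℤ
  | 0, 0 => 1
  | 0, _ + 1 => 0
  | n + 1, 0 => -(n : ℤ) * stirling1 n 0
  | n + 1, k + 1 => stirling1 n k - (n : ℤ) * stirling1 n (k + 1)

/-- The Bell polynomial `B_m(x) = ∑_{j=0}^m S(m,j) x^j` over `ℤ`. -/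
noncomputable def bellPoly (m : ℕ) : Polynomial ℤ :=
  ∑ j ∈ range (m + 1), (stirling2 m j : ℤ) • X ^ j

/-- The derangement polynomial `D_m(x) = ∑_{j=0}^m C(m,j) j! (x-1)^{m-j}` over `ℤ`. -/
noncomputable def derPoly (m : ℕ) : Polynomial ℤ :=
  ∑ j ∈ range (m + 1), ((m.choose j * j.factorial : ℕ) : ℤ) • (X - 1) ^ (m - j)

/-- The Bell numbers `B_m = ∑_j S(m,j)`. -/
def bell (m : ℕ) : ℕ := ∑ j ∈ range (m + 1), stirling2 m j

open fwdDiff Nat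

theorem stirling2_eq_stirlingSecond : stirling2 = stirlingSecond := by
  ext n k
  induction n generalizing k with
  | zero => cases k <;> rfl
  | succ n ih => cases k <;> simp [stirling2, stirlingSecond_succ_succ, ih]

theorem bell_eq_sum_range {k N : ℕ} (h : k < N) : bell k = ∑ j ∈ range N, stirlingSecond k j := by
  rw [bell, stirling2_eq_stirlingSecond]
  refine sum_subset (range_subset_range.2 h) fun j _ hj ↦ stirlingSecond_eq_zero_of_lt ?_
  simpa using hj

theorem sum_Icc_one_eq_sum_range {M : Type*} [AddCommMonoid M] (f : ℕ → M) (N : ℕ) :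
    ∑ k ∈ Icc 1 N, f k = ∑ k ∈ range N, f (k + 1) := by
  rw [← Ico_add_one_right_eq_Icc, sum_Ico_eq_sum_range, Nat.add_sub_cancel]
  simp_rw [add_comm 1]

theorem fwdDiff_iter_succ_id_mul {R : Type*} [CommRing R] (g : R → R) (n : ℕ) (y : R) :
    Δ_[1] ^[n + 1] (fun r ↦ r * g r) y =
      (y + (n + 1)) * Δ_[1] ^[n + 1] g y + (n + 1) * Δ_[1] ^[n] g y := by
  have unfold (f : R → R) (m : ℕ) (z : R) :
      Δ_[1] ^[m + 1] f z = Δ_[1] ^[m] f (z + 1) - Δ_[1] ^[m] f z := by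
    rw [Function.iterate_succ_apply']; rfl
  induction n generalizing y with
  | zero => simp only [unfold, Function.iterate_zero_apply]; push_cast; ring
  | succ n ih =>
    rw [unfold _ (n + 1), ih, ih, unfold g (n + 1)]
    simp only [unfold g n]
    push_cast
    ring

theorem factorial_mul_stirlingSecond {R : Type*} [CommRing R] (k j : ℕ) :
    (j ! : R) * stirlingSecond k j = Δ_[1] ^[j] (fun r : R ↦ r ^ k) 0 := by
  induction k generalizing j with
  | zero =>
    cases j with
    | zero => simp
    | succ j => rw [Function.iterate_succ_apply]; simp [fwdDiff_iter_eq_sum_shift]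
  | succ k ih =>
    cases j with
    | zero => simp
    | succ j =>
      simp_rw [_root_.pow_succ']
      rw [fwdDiff_iter_succ_id_mul, zero_add, ← ih, ← ih, stirlingSecond_succ_succ,
        factorial_succ]
      push_cast
      ring

theorem numDerangements_eq_factorial_mul_sum {K : Type*} [Field K] {m : ℕ} (hm : (m ! : K) ≠ 0) :
    (numDerangements m : K) = m ! * ∑ t ∈ range (m + 1), (-1 : K) ^ t / t ! := by
  induction m with
  | zero => simp
  | succ m ih =>
    have hm' : (m ! : K) ≠ 0 := by
      rw [factorial_succ, Nat.cast_mul] at hm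
      exact right_ne_zero_of_mul hm
    have hsucc := congrArg (Int.cast : ℤ → K) (numDerangements_succ m)
    push_cast at hsucc
    rw [hsucc, ih hm', sum_range_succ _ (m + 1), mul_add, mul_div_cancel₀ _ hm, factorial_succ]
    push_cast
    ring

theorem coeff_bellPoly (n k : ℕ) : (bellPoly n).coeff k = stirlingSecond n k := by
  rw [bellPoly, finsetSum_coeff]
  simp only [coeff_smul, coeff_X_pow, smul_eq_mul, mul_ite, mul_one, mul_zero, sum_ite_eq,
    mem_range, stirling2_eq_stirlingSecond]
  split_ifs with h
  · rfl
  · rw [stirlingSecond_eq_zero_of_lt (by omega), Nat.cast_zero]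

theorem bellPoly_succ (n : ℕ) :
    bellPoly (n + 1) = X * (bellPoly n + derivative (bellPoly n)) := by
  ext (_ | k)
  · simp [coeff_bellPoly]
  · rw [coeff_X_mul, coeff_add, coeff_derivative, coeff_bellPoly, coeff_bellPoly, coeff_bellPoly,
      stirlingSecond_succ_succ]
    push_cast
    ring

theorem bell_eq_eval_map_bellPoly {R : Type*} [CommRing R] (n : ℕ) :
    (bell n : R) = ((bellPoly n).map (Int.castRingHom R)).eval 1 := by
  simp [bell, bellPoly, Polynomial.map_sum, eval_finsetSum]

theorem X_mul_add_derivative_X_pow_mul {R : Type*} [CommSemiring R] (p : ℕ) [CharP R p]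
    (f : R[X]) :
    X * (X ^ p * f + derivative (X ^ p * f)) = X ^ p * (X * (f + derivative f)) := by
  simp only [derivative_mul, derivative_X_pow, CharP.cast_eq_zero, map_zero, zero_mul, zero_add]
  ring

section Prime

variable {p : ℕ} [Fact p.Prime]

theorem natCast_factorial_ne_zero {j : ℕ} (hj : j < p) : (j ! : ZMod p) ≠ 0 :=
  ((IsUnit.natCast_factorial_iff_of_charP p).2 hj).ne_zero

theorem stirlingSecond_prime_left {j : ℕ} (hj : j < p) :
    (stirlingSecond p j : ZMod p) = stirlingSecond 1 j := by
  refine mul_left_cancel₀ (natCast_factorial_ne_zero hj) ?_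
  simp only [factorial_mul_stirlingSecond, ZMod.pow_card, pow_one]

theorem geom_sum_range_prime (x : ZMod p) :
    ∑ k ∈ range p, x ^ k = 1 - if x = 1 then 1 else 0 := by
  split_ifs with h
  · simp [h]
  · rw [sub_zero]
    refine mul_right_cancel₀ (sub_ne_zero.2 h) ?_
    rw [geom_sum_mul, ZMod.pow_card, one_mul]

theorem fwdDiff_iter_indicator_one {t : ℕ} (ht : t + 1 < p) :
    Δ_[1] ^[t + 1] (fun r : ZMod p ↦ if r = 1 then (1 : ZMod p) else 0) 0 = (-1) ^ t * (t + 1) := by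
  rw [fwdDiff_iter_eq_sum_shift, sum_eq_single 1]
  · simp
  · intro i hi hi1
    have hi1' : (i : ZMod p) ≠ 1 := by
      rw [← Nat.cast_one, Ne, ZMod.natCast_eq_natCast_iff', Nat.mod_eq_of_lt (by simp at hi; omega),
        Nat.mod_eq_of_lt (by omega)]
      exact hi1
    simp [hi1']
  · simp

theorem sum_range_prime_stirlingSecond_succ {t : ℕ} (ht : t + 1 < p) :
    ∑ k ∈ range p, (stirlingSecond k (t + 1) : ZMod p) = -((-1) ^ t / t !) := by
  set δ : ZMod p → ZMod p := fun r ↦ if r = 1 then 1 else 0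
  have hgeom : (∑ k ∈ range p, fun r : ZMod p ↦ r ^ k) + δ = fun _ ↦ 1 := by
    ext r
    simp [Finset.sum_apply, geom_sum_range_prime, δ]
  have hsum :
      Δ_[1] ^[t + 1] (∑ k ∈ range p, fun r : ZMod p ↦ r ^ k) 0 + Δ_[1] ^[t + 1] δ 0 = 0 := by
    rw [← Pi.add_apply, ← fwdDiff_iter_add, hgeom, Function.iterate_succ_apply, fwdDiff_const]
    simp [fwdDiff_iter_eq_sum_shift]
  have hfact : (t ! : ZMod p) ≠ 0 := natCast_factorial_ne_zero (t.lt_succ_self.trans ht)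
  refine mul_left_cancel₀ (natCast_factorial_ne_zero ht) ?_
  calc ((t + 1)! : ZMod p) * ∑ k ∈ range p, (stirlingSecond k (t + 1) : ZMod p)
      = Δ_[1] ^[t + 1] (∑ k ∈ range p, fun r : ZMod p ↦ r ^ k) 0 := by
        simp_rw [mul_sum, factorial_mul_stirlingSecond, ← Finset.sum_apply,
          ← fwdDiff_iter_finsetSum]
    _ = -((-1) ^ t * (t + 1)) := by linear_combination hsum - fwdDiff_iter_indicator_one ht
    _ = ((t + 1)! : ZMod p) * -((-1) ^ t / t !) := by
        rw [factorial_succ]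
        push_cast
        field_simp

theorem numDerangements_prime_sub_one :
    (numDerangements (p - 1) : ZMod p) = 1 - ∑ t ∈ range (p - 1), (-1 : ZMod p) ^ t / t ! := by
  have hwilson : ((p - 1)! : ZMod p) = -1 := ZMod.wilsons_lemma p
  rw [numDerangements_eq_factorial_mul_sum (by rw [hwilson]; exact neg_ne_zero.2 one_ne_zero),
    sum_range_succ, hwilson, ZMod.pow_card_sub_one_eq_one (neg_ne_zero.2 one_ne_zero)]
  ring

theorem sum_range_prime_bell :
    ∑ k ∈ range p, (bell k : ZMod p) = numDerangements (p - 1) := by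
  have hp : 0 < p := (Fact.out : p.Prime).pos
  have hcol0 : ∑ k ∈ range p, (stirlingSecond k 0 : ZMod p) = 1 := by
    rw [sum_eq_single 0 (fun k _ hk ↦ ?_) (by simp [hp])]
    · simp
    · obtain ⟨k, rfl⟩ := exists_eq_succ_of_ne_zero hk
      simp
  calc ∑ k ∈ range p, (bell k : ZMod p)
      = ∑ j ∈ range (p - 1 + 1), ∑ k ∈ range p, (stirlingSecond k j : ZMod p) := by
        rw [Nat.sub_add_cancel hp, sum_comm]
        refine sum_congr rfl fun k hk ↦ ?_
        rw [bell_eq_sum_range (mem_range.1 hk), Nat.cast_sum]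
    _ = 1 - ∑ t ∈ range (p - 1), (-1 : ZMod p) ^ t / t ! := by
        rw [sum_range_succ', hcol0, sum_congr rfl fun t ht ↦
          sum_range_prime_stirlingSecond_succ (by rw [mem_range] at ht; omega), sum_neg_distrib]
        ring
    _ = numDerangements (p - 1) := numDerangements_prime_sub_one.symm

variable {R : Type*} [CommRing R] [CharP R p]

theorem map_bellPoly_prime :
    (bellPoly p).map (Int.castRingHom R) = X ^ p + (bellPoly 1).map (Int.castRingHom R) := by
  have hp : 1 < p := (Fact.out : p.Prime).one_lt
  ext k
  simp only [coeff_map, coeff_bellPoly, coeff_add, coeff_X_pow, eq_intCast, Int.cast_natCast]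
  rcases lt_trichotomy k p with hk | rfl | hk
  · rw [if_neg hk.ne, zero_add, ← ZMod.cast_natCast dvd_rfl, stirlingSecond_prime_left hk,
      ZMod.cast_natCast dvd_rfl]
  · rw [stirlingSecond_self, if_pos rfl, stirlingSecond_eq_zero_of_lt hp]
    simp
  · rw [stirlingSecond_eq_zero_of_lt hk, if_neg hk.ne', stirlingSecond_eq_zero_of_lt (hp.trans hk)]
    simp

theorem map_bellPoly_add_prime (n : ℕ) :
    (bellPoly (n + p)).map (Int.castRingHom R) =
      X ^ p * (bellPoly n).map (Int.castRingHom R) +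
        (bellPoly (n + 1)).map (Int.castRingHom R) := by
  have step (m : ℕ) : (bellPoly (m + 1)).map (Int.castRingHom R) =
      X * ((bellPoly m).map (Int.castRingHom R) +
        derivative ((bellPoly m).map (Int.castRingHom R))) := by
    rw [bellPoly_succ, Polynomial.map_mul, Polynomial.map_add, derivative_map, map_X]
  induction n with
  | zero =>
    rw [zero_add, map_bellPoly_prime, zero_add]
    simp [bellPoly, stirling2]
  | succ n ih =>
    rw [add_right_comm, step, ih, step (n + 1), step n, derivative_add]
    linear_combination X_mul_add_derivative_X_pow_mul p ((bellPoly n).map (Int.castRingHom R))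

theorem bell_add_prime (n : ℕ) : (bell (n + p) : R) = bell (n + 1) + bell n := by
  rw [bell_eq_eval_map_bellPoly, map_bellPoly_add_prime, eval_add, eval_mul, eval_pow, eval_X,
    one_pow, one_mul, bell_eq_eval_map_bellPoly, bell_eq_eval_map_bellPoly, add_comm]

theorem sum_range_bell_add (n : ℕ) :
    ∑ k ∈ range p, (bell (n + k) : R) =
      ∑ k ∈ range p, (bell k : R) + ∑ k ∈ range n, (bell (k + 1) : R) := by
  induction n with
  | zero => simp
  | succ n ih =>
    have hshift := sum_range_succ' (fun k ↦ (bell (n + k) : R)) p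
    rw [sum_range_succ, bell_add_prime] at hshift
    simp only [add_zero, ← add_assoc] at hshift
    simp_rw [sum_range_succ _ n, add_right_comm n 1]
    linear_combination ih - hshift

end Prime

theorem bell_sum_derangement (n p : ℕ) (hn : 1 ≤ n) (hp : p.Prime) :
    ((∑ k ∈ Icc 1 (p - 1), (bell (n + k) : ℤ)) - ∑ k ∈ Icc 1 (n - 1), (bell k : ℤ)) ≡
      (numDerangements (p - 1) : ℤ) [ZMOD p] := by
  have : Fact p.Prime := ⟨hp⟩
  obtain ⟨m, rfl⟩ : ∃ m, n = m + 1 := ⟨n - 1, by omega⟩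
  obtain ⟨q, rfl⟩ : ∃ q, p = q + 1 := ⟨p - 1, (Nat.sub_add_cancel hp.one_le).symm⟩
  rw [← ZMod.intCast_eq_intCast_iff]
  push_cast
  have hwindow := sum_range_bell_add (p := q + 1) (R := ZMod (q + 1)) (m + 1)
  rw [sum_range_succ', sum_range_succ _ m, sum_range_prime_bell, Nat.add_sub_cancel, add_zero]
    at hwindow
  rw [sum_Icc_one_eq_sum_range, sum_Icc_one_eq_sum_range]
  linear_combination hwindow
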